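/- For any finite graph G = (V, E) and probability vector p ∈ [0,1]^E, the influence spread σ_p is submodular: for all A ⊆ B ⊆ V and x ∉ B, σ_p(A ∪ {x}) − σ_p(A) ≥ σ_p(B ∪ {x}) − σ_p(B). -/

import Mathlib

/-!
For a fixed set of live edges, the vertices reachable from `S` form the union of the sets
reachable from the individual seeds, so `S ↦ #(reachSet F S)` is a coverage function and hence
submodular. The spread is a combination of these coverage functions with the nonnegative weights
`∏ e ∈ F, p e * ∏ e ∈ E \ F, (1 - p e)`, and submodularity survives nonnegative combinations.
-/

open Finset

/-- The set of vertices reachable from the seed set S using only edges in A. -/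
noncomputable def reachSet {V : Type*} [Fintype V] (A : Finset (V × V)) (S : Finset V) :
    Finset V := by
  classical
  exact Finset.univ.filter (fun v => ∃ s ∈ S, Relation.ReflTransGen (fun a b => (a, b) ∈ A) s v)

/-- Influence spread: expected number of vertices reachable from S when each edge
e ∈ E is retained independently with probability p e. -/
noncomputable def spread {V : Type*} [Fintype V] [DecidableEq V] (E : Finset (V × V))
    (p : V × V → ℝ) (S : Finset V) : ℝ :=
  ∑ A ∈ E.powerset, ((reachSet A S).card : ℝ) * ((∏ e ∈ A, p e) * ∏ e ∈ E \ A, (1 - p e))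

namespace Finset

theorem card_union_add_card_le_card_union_add_card {α : Type*} [DecidableEq α]
    (X : Finset α) {S T : Finset α} (hST : S ⊆ T) :
    #(X ∪ T) + #S ≤ #(X ∪ S) + #T := by
  have hX_sdiff : #(X \ T) ≤ #(X \ S) := card_le_card (sdiff_subset_sdiff le_rfl hST)
  rw [← card_sdiff_add_card X T, ← card_sdiff_add_card X S]
  omega

end Finset

section reachSet

variable {V : Type*} [Fintype V] (F : Finset (V × V))

theorem mem_reachSet {S : Finset V} {v : V} :
    v ∈ reachSet F S ↔ ∃ s ∈ S, Relation.ReflTransGen (fun a b => (a, b) ∈ F) s v := by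
  classical
  simp [reachSet]

theorem reachSet_mono {S T : Finset V} (h : S ⊆ T) : reachSet F S ⊆ reachSet F T := by
  intro v hv
  obtain ⟨s, hs, hsv⟩ := (mem_reachSet F).1 hv
  exact (mem_reachSet F).2 ⟨s, h hs, hsv⟩

theorem reachSet_union [DecidableEq V] (S T : Finset V) :
    reachSet F (S ∪ T) = reachSet F S ∪ reachSet F T := by
  ext v
  simp only [mem_union, mem_reachSet, or_and_right, exists_or]

theorem card_reachSet_submodular [DecidableEq V] {A B : Finset V} (hAB : A ⊆ B) (x : V) :
    #(reachSet F (insert x B)) + #(reachSet F A) ≤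
      #(reachSet F (insert x A)) + #(reachSet F B) := by
  rw [insert_eq, insert_eq, reachSet_union, reachSet_union]
  exact card_union_add_card_le_card_union_add_card _ (reachSet_mono F hAB)

end reachSet

theorem prod_mul_prod_sdiff_one_sub_nonneg {ι : Type*} [DecidableEq ι] {E F : Finset ι}
    {p : ι → ℝ} (hp : ∀ e ∈ E, p e ∈ Set.Icc (0 : ℝ) 1) (hF : F ⊆ E) :
    0 ≤ (∏ e ∈ F, p e) * ∏ e ∈ E \ F, (1 - p e) :=
  mul_nonneg (prod_nonneg fun e he ↦ (hp e (hF he)).1)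
    (prod_nonneg fun e he ↦ sub_nonneg.2 (hp e (mem_sdiff.1 he).1).2)

theorem spread_submodular_general {V : Type*} [Fintype V] [DecidableEq V]
    (E : Finset (V × V)) (p : V × V → ℝ)
    (hp : ∀ e ∈ E, p e ∈ Set.Icc (0 : ℝ) 1)
    (A B : Finset V) (hAB : A ⊆ B) (x : V) :
    spread E p (insert x B) - spread E p B ≤ spread E p (insert x A) - spread E p A := by
  unfold spread
  rw [← sum_sub_distrib, ← sum_sub_distrib]
  refine sum_le_sum fun F hF ↦ ?_
  rw [← sub_mul, ← sub_mul]
  refine mul_le_mul_of_nonneg_right ?_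
    (prod_mul_prod_sdiff_one_sub_nonneg hp (mem_powerset.1 hF))
  have hcard : (#(reachSet F (insert x B)) : ℝ) + #(reachSet F A) ≤
      #(reachSet F (insert x A)) + #(reachSet F B) := by
    exact_mod_cast card_reachSet_submodular F hAB x
  linarith

/-- the influence spread function is submodular. -/
theorem spread_submodular {V : Type*} [Fintype V] [DecidableEq V]
    (E : Finset (V × V)) (p : V × V → ℝ)
    (hp : ∀ e ∈ E, p e ∈ Set.Icc (0 : ℝ) 1)
    (A B : Finset V) (hAB : A ⊆ B) (x : V) (hx : x ∉ B) :
    spread E p (insert x B) - spread E p B ≤ spread E p (insert x A) - spread E p A :=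
  spread_submodular_general E p hp A B hAB x
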